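/- Let ℓ ≥ 3. Then for all real x with 0 < x < 1/2: x·U_{ℓ−1}(1/(2x)) · Σ_{n≥0} b(n)·x^n = x·(Σ_{k=0}^{ℓ−1} U_k(1/(2x))) · Σ_{n≥0} c(n, ℓ−1)·x^n + Σ_{k=0}^{ℓ−2} U_k(1/(2x)), where all series converge absolutely. -/

import Mathlib

open Filter Real

/-- `aa n m` = number of length-`n` paths on `ℤ≥0` with steps `±1` starting at `0`
and ending at `m`. -/
def aa : ℕ → ℕ → ℕ
  | 0, m => if m = 0 then 1 else 0
  | n+1, m => aa n (m+1) + (if m = 0 then 0 else aa n (m-1))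

/-- `aSum n = Σ_{m=0}^n aa n m`. -/
def aSum (n : ℕ) : ℕ := ∑ m ∈ Finset.range (n+1), aa n m

/-- The modular variant `b(n,m)` depending on `ℓ`:
`b(n,m) = a(n,m)` if `m ≡ ℓ-1 (mod ℓ)`; otherwise `b(0,m) = δ_{m,0}`, and for `n ≥ 1`,
`b(n,m) = b(n-1,m-1) + b(n-1,m+1)` if `m % ℓ < ℓ-2` (negative-index terms are `0`),
and `b(n,m) = b(n-1,m-1)` if `m ≡ ℓ-2 (mod ℓ)`. -/
def bb (ℓ : ℕ) : ℕ → ℕ → ℕ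
  | 0, m => if m % ℓ = ℓ - 1 then aa 0 m else if m = 0 then 1 else 0
  | n+1, m =>
    if m % ℓ = ℓ - 1 then aa (n+1) m
    else if m % ℓ = ℓ - 2 then (if m = 0 then 0 else bb ℓ n (m-1))
    else (if m = 0 then 0 else bb ℓ n (m-1)) + bb ℓ n (m+1)

/-- `bSum ℓ n = Σ_{m=0}^n bb ℓ n m`. -/
def bSum (ℓ : ℕ) (n : ℕ) : ℕ := ∑ m ∈ Finset.range (n+1), bb ℓ n m

/-- `cc ℓ n r = Σ_{m ≥ 0, m ≡ r (mod ℓ)} aa n m` (finite since `aa n m = 0` for `m > n`). -/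
def cc (ℓ : ℕ) (n r : ℕ) : ℕ :=
  ∑ m ∈ Finset.range (n+1), if m % ℓ = r then aa n m else 0

/-- `ww ℓ n = Σ_{0 ≤ m ≤ n, m ≡ ℓ-1 (mod ℓ)} bb ℓ n m`. -/
def ww (ℓ : ℕ) (n : ℕ) : ℕ :=
  ∑ m ∈ Finset.range (n+1), if m % ℓ = ℓ - 1 then bb ℓ n m else 0

/-!
Write `A_m = ∑ₙ a(n,m) xⁿ` and `B_m = ∑ₙ b(n,m) xⁿ`. Since `a(n,m), b(n,m) ≤ 2ⁿ` and both vanish for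
`m > n`, for `0 ≤ x < 1/2` the double series converge absolutely and may be summed by columns:
`∑ₙ b(n) xⁿ = ∑_m B_m`. Reading off the last step of a path, inside the block
`m = jℓ + r`, `r ≤ ℓ - 2`, the `B_m` satisfy `B_m = x B_{m-1} + x B_{m+1}`, with
`B_{jℓ+ℓ-2} = x B_{jℓ+ℓ-3}` at the top and `B_{jℓ} = e_j + x B_{jℓ+1}` at the bottom, where
`e_0 = 1` and `e_{j+1} = x A_{jℓ+ℓ-1}` because `B = A` on the class `ℓ - 1`.
As `U_{k+1} = x U_k + x U_{k+2}` at `1/(2x)`, this finite system has the solution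
`x U_{ℓ-1} B_{jℓ+r} = e_j U_{ℓ-2-r}`. Summing over the block and then over `j`, with
`∑_j e_j = 1 + x ∑ₙ c(n,ℓ-1) xⁿ`, gives the identity.
-/

open Finset

lemma aa_le_two_pow (n m : ℕ) : aa n m ≤ 2 ^ n := by
  induction n generalizing m with
  | zero => unfold aa; split_ifs <;> simp
  | succ n ih =>
    rw [aa, pow_succ, mul_two]
    gcongr
    · exact ih _
    · split_ifs
      · positivity
      · exact ih _

lemma aa_eq_zero_of_lt {n m : ℕ} (h : n < m) : aa n m = 0 := by
  induction n generalizing m with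
  | zero => simp [aa, Nat.pos_iff_ne_zero.mp h]
  | succ n ih => simp [aa, ih (show n < m + 1 by omega), ih (show n < m - 1 by omega)]

lemma ite_aa_le_two_pow (p : Prop) [Decidable p] (n m : ℕ) :
    (if p then aa n m else 0) ≤ 2 ^ n := by
  split_ifs
  · exact aa_le_two_pow n m
  · positivity

lemma ite_aa_eq_zero_of_lt (p : Prop) [Decidable p] {n m : ℕ} (h : n < m) :
    (if p then aa n m else 0) = 0 := by
  simp [aa_eq_zero_of_lt h]

lemma bb_le_two_pow (ℓ n m : ℕ) : bb ℓ n m ≤ 2 ^ n := by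
  induction n generalizing m with
  | zero => unfold bb aa; split_ifs <;> simp
  | succ n ih =>
    have h₁ := ih (m - 1)
    have h₂ := ih (m + 1)
    have h₃ := aa_le_two_pow (n + 1) m
    rw [pow_succ] at h₃ ⊢
    unfold bb
    split_ifs <;> linarith

lemma bb_eq_zero_of_lt (ℓ : ℕ) {n m : ℕ} (h : n < m) : bb ℓ n m = 0 := by
  induction n generalizing m with
  | zero => simp [bb, Nat.pos_iff_ne_zero.mp h, aa_eq_zero_of_lt h]
  | succ n ih =>
    simp [bb, aa_eq_zero_of_lt h, Nat.pos_iff_ne_zero.mp (Nat.zero_lt_of_lt h),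
      ih (show n < m + 1 by omega), ih (show n < m - 1 by omega)]

section Series

variable {x : ℝ}

lemma summable_mul_pow_of_le_two_pow {f : ℕ → ℕ} (hf : ∀ n, f n ≤ 2 ^ n) (hx0 : 0 ≤ x)
    (hx : x < 1 / 2) : Summable fun n => (f n : ℝ) * x ^ n := by
  refine Summable.of_nonneg_of_le (fun n => by positivity) (fun n => ?_)
    (summable_geometric_of_lt_one (by positivity) (by linarith : 2 * x < 1))
  rw [mul_pow]
  gcongr
  exact_mod_cast hf n

lemma tsum_mul_pow_eq_add {f : ℕ → ℕ} (hf : ∀ n, f n ≤ 2 ^ n) (hx0 : 0 ≤ x) (hx : x < 1 / 2) :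
    ∑' n, (f n : ℝ) * x ^ n = f 0 + x * ∑' n, (f (n + 1) : ℝ) * x ^ n := by
  rw [(summable_mul_pow_of_le_two_pow hf hx0 hx).tsum_eq_zero_add, ← tsum_mul_left]
  simp only [pow_zero, mul_one, pow_succ]
  congr 1
  exact tsum_congr fun n => by ring

variable {F : ℕ → ℕ → ℕ}

lemma tsum_mul_pow_eq_sum_range (hF0 : ∀ n m, n < m → F n m = 0) (n : ℕ) :
    ∑' m, (F n m : ℝ) * x ^ n = ((∑ m ∈ range (n + 1), F n m : ℕ) : ℝ) * x ^ n := by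
  rw [tsum_eq_sum (s := range (n + 1)) fun m hm => by
    simp [hF0 n m (by simpa using hm)], Nat.cast_sum, sum_mul]

lemma summable_uncurry_mul_pow (hF : ∀ n m, F n m ≤ 2 ^ n) (hF0 : ∀ n m, n < m → F n m = 0)
    (hx0 : 0 ≤ x) (hx : x < 1 / 2) : Summable fun p : ℕ × ℕ => (F p.1 p.2 : ℝ) * x ^ p.1 := by
  have hrow (n : ℕ) : Summable fun m => (F n m : ℝ) * x ^ n :=
    summable_of_ne_finset_zero (s := range (n + 1)) fun m hm => by
      simp [hF0 n m (by simpa using hm)]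
  have hgeom : Summable fun n : ℕ => ((n : ℝ) + 1) * (2 * x) ^ n := by
    have h2x : ‖2 * x‖ < 1 := by rw [Real.norm_of_nonneg (by positivity)]; linarith
    simpa [add_mul] using
      (summable_pow_mul_geometric_of_norm_lt_one 1 h2x).add (summable_geometric_of_norm_lt_one h2x)
  refine (summable_prod_of_nonneg fun p => by positivity).mpr ⟨hrow, ?_⟩
  refine Summable.of_nonneg_of_le (fun n => tsum_nonneg fun m => by positivity) (fun n => ?_) hgeom
  rw [tsum_mul_pow_eq_sum_range hF0, mul_pow, ← mul_assoc]
  gcongr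
  calc ((∑ m ∈ range (n + 1), F n m : ℕ) : ℝ) ≤ ((n + 1) * 2 ^ n : ℕ) := by
        gcongr
        simpa using sum_le_card_nsmul (range (n + 1)) (F n) (2 ^ n) fun m _ => hF n m
    _ = ((n : ℝ) + 1) * 2 ^ n := by push_cast; ring

lemma summable_sum_range_mul_pow (hF : ∀ n m, F n m ≤ 2 ^ n) (hF0 : ∀ n m, n < m → F n m = 0)
    (hx0 : 0 ≤ x) (hx : x < 1 / 2) :
    Summable fun n => ((∑ m ∈ range (n + 1), F n m : ℕ) : ℝ) * x ^ n :=
  (summable_uncurry_mul_pow hF hF0 hx0 hx).prod.congr (tsum_mul_pow_eq_sum_range hF0)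

lemma hasSum_tsum_mul_pow_sum_range (hF : ∀ n m, F n m ≤ 2 ^ n) (hF0 : ∀ n m, n < m → F n m = 0)
    (hx0 : 0 ≤ x) (hx : x < 1 / 2) :
    HasSum (fun m => ∑' n, (F n m : ℝ) * x ^ n)
      (∑' n, ((∑ m ∈ range (n + 1), F n m : ℕ) : ℝ) * x ^ n) := by
  have hS := summable_uncurry_mul_pow hF hF0 hx0 hx
  convert hS.prod_symm.hasSum.prod_fiberwise fun m =>
    (summable_mul_pow_of_le_two_pow (fun n => hF n m) hx0 hx).hasSum using 1
  refine (tsum_congr (tsum_mul_pow_eq_sum_range hF0)).symm.trans ?_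
  rw [← hS.tsum_prod' fun n => hS.comp_injective (Prod.mk_right_injective n)]
  exact ((Equiv.prodComm ℕ ℕ).tsum_eq fun p => (F p.1 p.2 : ℝ) * x ^ p.1).symm

end Series

lemma HasSum.sum_range_mul_add {α : Type*} [AddCommMonoid α] [TopologicalSpace α]
    [ContinuousAdd α] [RegularSpace α] {f : ℕ → α} {a : α} {ℓ : ℕ} (hℓ : ℓ ≠ 0)
    (hf : HasSum f a) : HasSum (fun j => ∑ r ∈ range ℓ, f (j * ℓ + r)) a := by
  have : NeZero ℓ := ⟨hℓ⟩
  refine ((Nat.divModEquiv ℓ).symm.hasSum_iff.mpr hf).prod_fiberwise fun j => ?_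
  simpa [Nat.divModEquiv_symm_apply, Fin.sum_univ_eq_sum_range (fun r => f (j * ℓ + r))] using
    hasSum_fintype (fun r : Fin ℓ => f (j * ℓ + r))

noncomputable def aGF (x : ℝ) (m : ℕ) : ℝ := ∑' n, (aa n m : ℝ) * x ^ n

noncomputable def bGF (ℓ : ℕ) (x : ℝ) (m : ℕ) : ℝ := ∑' n, (bb ℓ n m : ℝ) * x ^ n

section GeneratingFunctions

variable {ℓ m : ℕ} {x : ℝ}

lemma bGF_of_mod_eq_sub_one (h : m % ℓ = ℓ - 1) : bGF ℓ x m = aGF x m :=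
  tsum_congr fun n => by cases n <;> simp [bb, h]

lemma bGF_succ_of_mod_eq_sub_two (hℓ : 2 ≤ ℓ) (h : (m + 1) % ℓ = ℓ - 2) (hx0 : 0 ≤ x)
    (hx : x < 1 / 2) : bGF ℓ x (m + 1) = x * bGF ℓ x m := by
  have h' : ℓ - 2 ≠ ℓ - 1 := by omega
  rw [bGF, tsum_mul_pow_eq_add (fun n => bb_le_two_pow ℓ n (m + 1)) hx0 hx]
  simp [bb, h, h', bGF]

lemma bGF_succ_of_mod_lt (h : (m + 1) % ℓ < ℓ - 2) (hx0 : 0 ≤ x) (hx : x < 1 / 2) :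
    bGF ℓ x (m + 1) = x * bGF ℓ x m + x * bGF ℓ x (m + 2) := by
  have h₁ : (m + 1) % ℓ ≠ ℓ - 1 := by omega
  have h₂ : (m + 1) % ℓ ≠ ℓ - 2 := by omega
  have hsum (k : ℕ) := summable_mul_pow_of_le_two_pow (fun n => bb_le_two_pow ℓ n k) hx0 hx
  rw [bGF, tsum_mul_pow_eq_add (fun n => bb_le_two_pow ℓ n (m + 1)) hx0 hx, bGF, bGF, ← mul_add,
    ← (hsum m).tsum_add (hsum (m + 2))]
  simp [bb, h₁, h₂, add_mul]

lemma bGF_zero (hℓ : 3 ≤ ℓ) (hx0 : 0 ≤ x) (hx : x < 1 / 2) :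
    bGF ℓ x 0 = 1 + x * bGF ℓ x 1 := by
  have h₁ : 0 ≠ ℓ - 1 := by omega
  have h₂ : 0 ≠ ℓ - 2 := by omega
  rw [bGF, tsum_mul_pow_eq_add (fun n => bb_le_two_pow ℓ n 0) hx0 hx]
  simp [bb, h₁, h₂, bGF]

lemma bGF_succ_mul (hℓ : 3 ≤ ℓ) (j : ℕ) (hx0 : 0 ≤ x) (hx : x < 1 / 2) :
    bGF ℓ x ((j + 1) * ℓ) = x * aGF x (j * ℓ + (ℓ - 1)) + x * bGF ℓ x ((j + 1) * ℓ + 1) := by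
  have hm : j * ℓ + (ℓ - 1) + 1 = (j + 1) * ℓ := by rw [add_mul]; omega
  have hmod : (j * ℓ + (ℓ - 1)) % ℓ = ℓ - 1 := Nat.mul_add_mod_of_lt (by omega)
  have h := bGF_succ_of_mod_lt (ℓ := ℓ) (m := j * ℓ + (ℓ - 1)) (by simp [hm]; omega) hx0 hx
  rwa [bGF_of_mod_eq_sub_one hmod, show j * ℓ + (ℓ - 1) + 2 = (j + 1) * ℓ + 1 by omega, hm] at h

end GeneratingFunctions

noncomputable def chebU {K : Type*} [Field K] (x : K) (k : ℕ) : K :=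
  (Polynomial.Chebyshev.U K k).eval (1 / (2 * x))

section Chebyshev

open Polynomial.Chebyshev

variable {K : Type*} [Field K] {x : K}

lemma chebU_zero : chebU x 0 = 1 := by simp [chebU]

variable [NeZero (2 : K)]

lemma mul_chebU_one (hx : x ≠ 0) : x * chebU x 1 = 1 := by
  simp only [chebU, Nat.cast_one, U_one, Polynomial.eval_mul, Polynomial.eval_ofNat,
    Polynomial.eval_X]
  field_simp

lemma chebU_succ (hx : x ≠ 0) (k : ℕ) :
    chebU x (k + 1) = x * chebU x k + x * chebU x (k + 2) := by
  simp only [chebU, Nat.cast_add, Nat.cast_ofNat, Nat.cast_one, U_add_two, Polynomial.eval_sub,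
    Polynomial.eval_mul, Polynomial.eval_ofNat, Polynomial.eval_X]
  field_simp
  ring

lemma eq_mul_chebU_of_rec (hx : x ≠ 0) {N : ℕ} {ψ : ℕ → K} (h0 : ψ 0 = x * ψ 1)
    (hrec : ∀ k, k + 2 ≤ N → ψ (k + 1) = x * ψ k + x * ψ (k + 2)) :
    ∀ k ≤ N, ψ k = ψ 0 * chebU x k := by
  intro k
  induction k using Nat.twoStepInduction with
  | zero => simp [chebU_zero]
  | one => intro; linear_combination -chebU x 1 * h0 - ψ 1 * mul_chebU_one hx
  | more k ih₁ ih₂ =>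
    intro hk
    refine mul_left_cancel₀ hx ?_
    linear_combination (ih₂ (by omega)) - x * ih₁ (by omega) - hrec k hk
      + ψ 0 * chebU_succ hx k

lemma mul_chebU_mul_sum_of_rec (hx : x ≠ 0) {N : ℕ} {φ : ℕ → K} {e : K}
    (htop : φ (N + 1) = x * φ N)
    (hmid : ∀ r, r + 1 ≤ N → φ (r + 1) = x * φ r + x * φ (r + 2))
    (hbot : φ 0 = e + x * φ 1) :
    x * chebU x (N + 2) * ∑ r ∈ range (N + 2), φ r
      = e * ∑ k ∈ range (N + 2), chebU x k := by
  -- read from the top, `φ` solves the recurrence of `eq_mul_chebU_of_rec`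
  have hψ := eq_mul_chebU_of_rec hx (ψ := fun k => φ (N + 1 - k)) (N := N + 1)
    (by simpa using htop) fun k hk => by
      have := hmid (N - 1 - k) (by omega)
      rw [show N - 1 - k + 1 = N + 1 - (k + 1) by omega,
        show N - 1 - k + 2 = N + 1 - k by omega] at this
      rw [show N + 1 - (k + 2) = N - 1 - k by omega]
      linear_combination this
  simp only [Nat.sub_zero] at hψ
  have he : e = φ (N + 1) * (x * chebU x (N + 2)) := by
    have h₁ := hψ (N + 1) le_rfl
    have h₂ := hψ N (by omega)
    simp only [Nat.sub_self, show N + 1 - N = 1 by omega] at h₁ h₂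
    linear_combination -hbot + h₁ - x * h₂ + φ (N + 1) * chebU_succ hx N
  rw [he, ← sum_range_reflect, mul_sum, mul_sum]
  refine sum_congr rfl fun k hk => ?_
  rw [show N + 2 - 1 - k = N + 1 - k by omega, hψ k (by simp at hk; omega)]
  ring

end Chebyshev

section Assembly

variable {ℓ : ℕ} {x : ℝ}

lemma mul_chebU_mul_sum_bGF (hℓ : 3 ≤ ℓ) (hx0 : 0 < x) (hx : x < 1 / 2) (j : ℕ) {e : ℝ}
    (he : bGF ℓ x (j * ℓ) = e + x * bGF ℓ x (j * ℓ + 1)) :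
    x * chebU x (ℓ - 1) * ∑ r ∈ range (ℓ - 1), bGF ℓ x (j * ℓ + r)
      = e * ∑ k ∈ range (ℓ - 1), chebU x k := by
  obtain ⟨N, rfl⟩ : ∃ N, ℓ = N + 3 := ⟨ℓ - 3, by omega⟩
  refine mul_chebU_mul_sum_of_rec hx0.ne' (φ := fun r => bGF (N + 3) x (j * (N + 3) + r))
    ?_ ?_ he
  · exact bGF_succ_of_mod_eq_sub_two (m := j * (N + 3) + N) (by omega)
      (by rw [add_assoc]; exact Nat.mul_add_mod_of_lt (by omega)) hx0.le hx
  · intro r hr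
    simpa only [add_assoc] using bGF_succ_of_mod_lt (m := j * (N + 3) + r)
      (by rw [add_assoc, Nat.mul_add_mod_of_lt (by omega)]; omega) hx0.le hx

lemma hasSum_bGF (hx0 : 0 ≤ x) (hx : x < 1 / 2) :
    HasSum (bGF ℓ x) (∑' n, (bSum ℓ n : ℝ) * x ^ n) :=
  hasSum_tsum_mul_pow_sum_range (bb_le_two_pow ℓ) (fun _ _ => bb_eq_zero_of_lt ℓ) hx0 hx

lemma summable_cc (r : ℕ) (hx0 : 0 ≤ x) (hx : x < 1 / 2) :
    Summable fun n => (cc ℓ n r : ℝ) * x ^ n :=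
  summable_sum_range_mul_pow (fun n m => ite_aa_le_two_pow (m % ℓ = r) n m)
    (fun _ m => ite_aa_eq_zero_of_lt (m % ℓ = r)) hx0 hx

lemma hasSum_aGF_mul_add {r : ℕ} (hr : r < ℓ) (hx0 : 0 ≤ x) (hx : x < 1 / 2) :
    HasSum (fun j => aGF x (j * ℓ + r)) (∑' n, (cc ℓ n r : ℝ) * x ^ n) := by
  refine ((hasSum_tsum_mul_pow_sum_range (fun n m => ite_aa_le_two_pow (m % ℓ = r) n m)
    (fun _ m => ite_aa_eq_zero_of_lt (m % ℓ = r)) hx0 hx).sum_range_mul_add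
    (by omega : ℓ ≠ 0)).congr_fun fun j => ?_
  rw [sum_eq_single_of_mem r (by simpa using hr) fun s hs hne => ?_]
  · simp [Nat.mul_add_mod_of_lt hr, aGF]
  · simp [Nat.mul_add_mod_of_lt (show s < ℓ by simpa using hs), hne]

lemma mul_chebU_mul_tsum_bSum (hℓ : 3 ≤ ℓ) (hx0 : 0 < x) (hx : x < 1 / 2) :
    x * chebU x (ℓ - 1) * ∑' n, (bSum ℓ n : ℝ) * x ^ n
      = x * (∑ k ∈ range ℓ, chebU x k) * ∑' n, (cc ℓ n (ℓ - 1) : ℝ) * x ^ n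
        + ∑ k ∈ range (ℓ - 1), chebU x k := by
  set u := chebU x (ℓ - 1)
  set S := ∑ k ∈ range (ℓ - 1), chebU x k
  set C := ∑' n, (cc ℓ n (ℓ - 1) : ℝ) * x ^ n
  have hC := hasSum_aGF_mul_add (show ℓ - 1 < ℓ by omega) hx0.le hx
  have hT : HasSum (fun j => x * u * ∑ r ∈ range (ℓ - 1), bGF ℓ x (j * ℓ + r))
      (x * u * (∑' n, (bSum ℓ n : ℝ) * x ^ n - C)) := by
    have hB := (hasSum_bGF (ℓ := ℓ) hx0.le hx).sum_range_mul_add (by omega : ℓ ≠ 0)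
    refine ((hB.sub hC).mul_left (x * u)).congr_fun fun j => ?_
    congr 1
    rw [eq_sub_iff_add_eq, ← bGF_of_mod_eq_sub_one (Nat.mul_add_mod_of_lt (by omega)),
      ← sum_range_succ, Nat.sub_add_cancel (by omega)]
  have hT' : HasSum (fun j => x * u * ∑ r ∈ range (ℓ - 1), bGF ℓ x (j * ℓ + r))
      (S + x * C * S) := by
    rw [← hasSum_nat_add_iff' 1, sum_range_one,
      mul_chebU_mul_sum_bGF hℓ hx0 hx 0 (by simpa using bGF_zero hℓ hx0.le hx), one_mul,
      add_sub_cancel_left]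
    refine ((hC.mul_left x).mul_right S).congr_fun fun j => ?_
    rw [mul_chebU_mul_sum_bGF hℓ hx0 hx (j + 1) (bGF_succ_mul hℓ j hx0.le hx)]
  have hS : ∑ k ∈ range ℓ, chebU x k = S + u := by
    rw [← sum_range_succ, Nat.sub_add_cancel (by omega)]
  rw [hS]
  linear_combination hT.unique hT'

end Assembly

/-- For `ℓ ≥ 3` and `0 < x < 1/2`:
`x·U_{ℓ−1}(1/(2x))·Σ_n b(n)xⁿ = x·(Σ_{k=0}^{ℓ−1} U_k(1/(2x)))·Σ_n c(n,ℓ−1)xⁿ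
 + Σ_{k=0}^{ℓ−2} U_k(1/(2x))`, all series converging absolutely. -/
theorem stmt16 (ℓ : ℕ) (hℓ : 3 ≤ ℓ) (x : ℝ) (hx0 : 0 < x) (hx : x < 1/2) :
    Summable (fun n : ℕ => (bSum ℓ n : ℝ) * x ^ n) ∧
    Summable (fun n : ℕ => (cc ℓ n (ℓ - 1) : ℝ) * x ^ n) ∧
    x * (Polynomial.Chebyshev.U ℝ ((ℓ : ℤ) - 1)).eval (1 / (2 * x)) *
        ∑' n : ℕ, (bSum ℓ n : ℝ) * x ^ n =
      x * (∑ k ∈ Finset.range ℓ, (Polynomial.Chebyshev.U ℝ (k : ℤ)).eval (1 / (2 * x))) *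
          (∑' n : ℕ, (cc ℓ n (ℓ - 1) : ℝ) * x ^ n) +
        ∑ k ∈ Finset.range (ℓ - 1), (Polynomial.Chebyshev.U ℝ (k : ℤ)).eval (1 / (2 * x)) := by
  refine ⟨summable_sum_range_mul_pow (bb_le_two_pow ℓ) (fun _ _ => bb_eq_zero_of_lt ℓ) hx0.le hx,
    summable_cc (ℓ - 1) hx0.le hx, ?_⟩
  have hcast : ((ℓ - 1 : ℕ) : ℤ) = (ℓ : ℤ) - 1 := by omega
  simpa only [chebU, hcast] using mul_chebU_mul_tsum_bSum hℓ hx0 hx
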